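/- arXiv:1505.07289 — 3 statements merged into one kernel-verified Lean document; each statement's English description precedes it below -/
import Mathlib

section
/- Let R be a commutative ring and let x = (x_1, ..., x_p) be a regular sequence in R. Then the Koszul complex of x over R is a free resolution of R/(x_1, ..., x_p), i.e., the augmented Koszul complex is exact. -/
/-!
Split off the last element `y = x (last p)`. Every subset of `Fin (p + 1)` is either `S` or
`S ∪ {last p}` with `S ⊆ Fin p`, so `⋀^{k+1} R^{p+1} = ⋀^{k+1} R^p ⊕ ⋀^k R^p`, and in these
coordinates the Koszul complex of `x` is the mapping cone of `± y` acting on the Koszul complex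
of `x' = x ∘ castSucc`. Both `δ² = 0` and exactness then go by induction on `p`. For a cycle
`(a, b)`, the component `b` is a cycle of `K(x')`, hence a boundary by induction; in degree `0`
the cycle condition reads `y b ∈ (x')`, so `b ∈ (x')` by regularity and again `b` is a boundary.
Writing `b = δ g`, `a ± y g` is a cycle of `K(x')`, a boundary `δ h`, and `(a, b) = δ (h, g)`.
-/

/-- The `k`-th module of the Koszul complex of a `p`-tuple: functions on the
`k`-element subsets of `Fin p`, i.e. `⋀^k R^p` in the basis `e_I`. -/
abbrev KoszulMod (R : Type*) [CommRing R] (p k : ℕ) : Type _ :=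
  {s : Finset (Fin p) // s.card = k} → R

/-- The Koszul differential `δ_x : ⋀^{k+1} R^p → ⋀^k R^p`, contraction with
`x₁ e₁^* + ⋯ + x_p e_p^*`, in the bases `e_I`:
`(δ f)(J) = ∑_{i ∉ J} (-1)^{#{j ∈ J : j < i}} x_i f(J ∪ {i})`. -/
noncomputable def koszulDiff (R : Type*) [CommRing R] (p : ℕ) (x : Fin p → R) (k : ℕ) :
    KoszulMod R p (k + 1) →ₗ[R] KoszulMod R p k where
  toFun f J := ∑ i ∈ (J.1ᶜ).attach,
    ((-1 : R) ^ (J.1.filter (fun j => j < i.1)).card * x i.1) *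
      f ⟨insert i.1 J.1, by
        rw [Finset.card_insert_of_notMem (Finset.mem_compl.mp i.2), J.2]⟩
  map_add' f g := by
    funext J
    simp [mul_add, Finset.sum_add_distrib]
  map_smul' r f := by
    funext J
    simp only [Pi.smul_apply, smul_eq_mul, RingHom.id_apply]
    rw [Finset.mul_sum]
    exact Finset.sum_congr rfl fun i _ => by ring

namespace Koszul

variable {R : Type*} [CommRing R] {p k : ℕ}

/-- `f` extended by zero to all finsets, so that index sets can be rewritten freely. -/
def coeff (f : KoszulMod R p k) (S : Finset (Fin p)) : R :=
  if h : S.card = k then f ⟨S, h⟩ else 0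

lemma coeff_of_card_eq (f : KoszulMod R p k) {S : Finset (Fin p)} (h : S.card = k) :
    coeff f S = f ⟨S, h⟩ :=
  dif_pos h

@[simp] lemma coeff_val (f : KoszulMod R p k) (S : {s : Finset (Fin p) // s.card = k}) :
    coeff f S.1 = f S :=
  dif_pos S.2

lemma koszulDiff_apply (x : Fin p → R) (f : KoszulMod R p (k + 1))
    (J : {s : Finset (Fin p) // s.card = k}) :
    koszulDiff R p x k f J =
      ∑ i ∈ J.1ᶜ, ((-1 : R) ^ (J.1.filter (· < i)).card * x i) * coeff f (insert i J.1) := by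
  rw [← Finset.sum_attach J.1ᶜ]
  refine Finset.sum_congr rfl fun i _ => ?_
  rw [coeff_of_card_eq]

lemma ext_of_apply_empty {f g : KoszulMod R p 0}
    (h : f ⟨∅, Finset.card_empty⟩ = g ⟨∅, Finset.card_empty⟩) : f = g := by
  funext S
  obtain rfl : S = ⟨∅, Finset.card_empty⟩ := Subtype.ext (Finset.card_eq_zero.mp S.2)
  exact h

section CastSucc

noncomputable def preCastSucc (S : Finset (Fin (p + 1))) : Finset (Fin p) :=
  S.preimage Fin.castSucc (Fin.castSucc_injective p).injOn

lemma last_notMem_map_castSucc (s : Finset (Fin p)) : Fin.last p ∉ s.map Fin.castSuccEmb := by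
  simp [Fin.castSucc_ne_last]

lemma card_insert_last_map_castSucc (s : Finset (Fin p)) :
    (insert (Fin.last p) (s.map Fin.castSuccEmb)).card = s.card + 1 := by
  rw [Finset.card_insert_of_notMem (last_notMem_map_castSucc s), Finset.card_map]

@[simp] lemma preCastSucc_map_castSucc (s : Finset (Fin p)) :
    preCastSucc (s.map Fin.castSuccEmb) = s := by
  ext i
  simp [preCastSucc]

lemma map_castSucc_preCastSucc {S : Finset (Fin (p + 1))} (h : Fin.last p ∉ S) :
    (preCastSucc S).map Fin.castSuccEmb = S := by
  ext i
  cases i using Fin.lastCases with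
  | last => simpa using h
  | cast j => simp [preCastSucc]

lemma compl_map_castSucc (s : Finset (Fin p)) :
    (s.map Fin.castSuccEmb)ᶜ = insert (Fin.last p) (sᶜ.map Fin.castSuccEmb) := by
  ext i
  cases i using Fin.lastCases with
  | last => simp [Fin.castSucc_ne_last]
  | cast j => simp [(Fin.castSucc_lt_last j).ne]

lemma card_filter_map_castSucc_lt (s : Finset (Fin p)) (i : Fin p) :
    ((s.map Fin.castSuccEmb).filter (· < i.castSucc)).card = (s.filter (· < i)).card := by
  rw [Finset.filter_map, Finset.card_map]
  simp [Function.comp_def]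

end CastSucc

section Parts

def castSuccPart (f : KoszulMod R (p + 1) k) : KoszulMod R p k :=
  fun J => coeff f (J.1.map Fin.castSuccEmb)

def lastPart (f : KoszulMod R (p + 1) (k + 1)) : KoszulMod R p k :=
  fun J => coeff f (insert (Fin.last p) (J.1.map Fin.castSuccEmb))

noncomputable def glue (a : KoszulMod R p (k + 1)) (b : KoszulMod R p k) :
    KoszulMod R (p + 1) (k + 1) :=
  fun S => if Fin.last p ∈ S.1 then coeff b (preCastSucc (S.1.erase (Fin.last p)))
    else coeff a (preCastSucc S.1)

lemma coeff_castSuccPart (f : KoszulMod R (p + 1) k) (S : Finset (Fin p)) :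
    coeff (castSuccPart f) S = coeff f (S.map Fin.castSuccEmb) := by
  by_cases h : S.card = k
  · rw [coeff_of_card_eq _ h]; rfl
  · rw [coeff, coeff, dif_neg h, dif_neg (by rwa [Finset.card_map])]

lemma coeff_lastPart (f : KoszulMod R (p + 1) (k + 1)) (S : Finset (Fin p)) :
    coeff (lastPart f) S = coeff f (insert (Fin.last p) (S.map Fin.castSuccEmb)) := by
  by_cases h : S.card = k
  · rw [coeff_of_card_eq _ h]; rfl
  · rw [coeff, coeff, dif_neg h, dif_neg (by rw [card_insert_last_map_castSucc]; omega)]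

@[simp] lemma castSuccPart_glue (a : KoszulMod R p (k + 1)) (b : KoszulMod R p k) :
    castSuccPart (glue a b) = a := by
  funext J
  rw [castSuccPart, coeff_of_card_eq _ (by rw [Finset.card_map, J.2]), glue,
    if_neg (last_notMem_map_castSucc _), preCastSucc_map_castSucc, coeff_val]

@[simp] lemma lastPart_glue (a : KoszulMod R p (k + 1)) (b : KoszulMod R p k) :
    lastPart (glue a b) = b := by
  funext J
  rw [lastPart, coeff_of_card_eq _ (by rw [card_insert_last_map_castSucc, J.2]), glue,
    if_pos (Finset.mem_insert_self _ _), Finset.erase_insert (last_notMem_map_castSucc _),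
    preCastSucc_map_castSucc, coeff_val]

lemma ext_parts {f g : KoszulMod R (p + 1) (k + 1)} (h₀ : castSuccPart f = castSuccPart g)
    (h₁ : lastPart f = lastPart g) : f = g := by
  funext S
  rw [← coeff_val f, ← coeff_val g]
  by_cases hS : Fin.last p ∈ S.1
  · have hT : Fin.last p ∉ S.1.erase (Fin.last p) := Finset.notMem_erase _ _
    have h := congrArg (coeff · (preCastSucc (S.1.erase (Fin.last p)))) h₁
    simpa only [coeff_lastPart, map_castSucc_preCastSucc hT, Finset.insert_erase hS] using h
  · have h := congrArg (coeff · (preCastSucc S.1)) h₀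
    simpa only [coeff_castSuccPart, map_castSucc_preCastSucc hS] using h

end Parts

section Cone

variable (x : Fin (p + 1) → R)

lemma castSuccPart_koszulDiff (f : KoszulMod R (p + 1) (k + 1)) :
    castSuccPart (koszulDiff R (p + 1) x k f) =
      koszulDiff R p (x ∘ Fin.castSucc) k (castSuccPart f) +
        ((-1 : R) ^ k * x (Fin.last p)) • lastPart f := by
  funext J
  have hlast : (J.1.map Fin.castSuccEmb).filter (· < Fin.last p) = J.1.map Fin.castSuccEmb :=
    Finset.filter_true_of_mem fun j hj => by
      obtain ⟨j, -, rfl⟩ := Finset.mem_map.mp hj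
      exact Fin.castSucc_lt_last j
  rw [castSuccPart, coeff_of_card_eq _ (by rw [Finset.card_map, J.2]), koszulDiff_apply]
  dsimp only
  rw [compl_map_castSucc, Finset.sum_insert (last_notMem_map_castSucc _), Finset.sum_map,
    Pi.add_apply, koszulDiff_apply, add_comm, hlast, Finset.card_map, J.2]
  congr 1
  refine Finset.sum_congr rfl fun i _ => ?_
  rw [Fin.coe_castSuccEmb, coeff_castSuccPart, Finset.map_insert, card_filter_map_castSucc_lt]
  rfl

lemma lastPart_koszulDiff (f : KoszulMod R (p + 1) (k + 2)) :
    lastPart (koszulDiff R (p + 1) x (k + 1) f) =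
      koszulDiff R p (x ∘ Fin.castSucc) k (lastPart f) := by
  funext J
  have hcompl : (insert (Fin.last p) (J.1.map Fin.castSuccEmb))ᶜ = J.1ᶜ.map Fin.castSuccEmb := by
    rw [Finset.compl_insert, compl_map_castSucc,
      Finset.erase_insert (last_notMem_map_castSucc _)]
  rw [lastPart, coeff_of_card_eq _ (by rw [card_insert_last_map_castSucc, J.2]),
    koszulDiff_apply, koszulDiff_apply, hcompl, Finset.sum_map]
  refine Finset.sum_congr rfl fun i _ => ?_
  rw [Fin.coe_castSuccEmb, coeff_lastPart, Finset.map_insert, Finset.insert_comm,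
    Finset.filter_insert, if_neg (Fin.castSucc_lt_last i).not_gt, card_filter_map_castSucc_lt]
  rfl

end Cone

@[simp] lemma castSuccPart_zero : castSuccPart (0 : KoszulMod R (p + 1) k) = 0 := by
  funext J
  simp [castSuccPart, coeff]

@[simp] lemma lastPart_zero : lastPart (0 : KoszulMod R (p + 1) (k + 1)) = 0 := by
  funext J
  simp [lastPart, coeff]

lemma ext_castSuccPart {f g : KoszulMod R (p + 1) 0}
    (h : castSuccPart f = castSuccPart g) : f = g := by
  refine ext_of_apply_empty ?_
  simpa [castSuccPart, coeff] using congrFun h ⟨∅, Finset.card_empty⟩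

lemma koszulDiff_fin_zero (x : Fin 0 → R) : koszulDiff R 0 x k = 0 := by
  refine LinearMap.ext fun f => funext fun J => ?_
  rw [koszulDiff_apply, Finset.eq_empty_of_isEmpty J.1ᶜ, Finset.sum_empty]
  rfl

theorem koszulDiff_comp_koszulDiff (x : Fin p → R) (k : ℕ) :
    (koszulDiff R p x k).comp (koszulDiff R p x (k + 1)) = 0 := by
  induction p generalizing k with
  | zero => rw [koszulDiff_fin_zero, LinearMap.zero_comp]
  | succ p ih =>
    have hcast (k : ℕ) (f : KoszulMod R (p + 1) (k + 2)) :
        castSuccPart (koszulDiff R (p + 1) x k (koszulDiff R (p + 1) x (k + 1) f)) = 0 := by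
      rw [castSuccPart_koszulDiff, castSuccPart_koszulDiff, lastPart_koszulDiff, map_add,
        map_smul, ← LinearMap.comp_apply, ih, LinearMap.zero_apply, zero_add, ← add_smul]
      have hsign : (-1 : R) ^ (k + 1) * x (Fin.last p) + (-1) ^ k * x (Fin.last p) = 0 := by ring
      rw [hsign, zero_smul]
    refine LinearMap.ext fun f => ?_
    rw [LinearMap.comp_apply, LinearMap.zero_apply]
    cases k with
    | zero => exact ext_castSuccPart (by rw [hcast, castSuccPart_zero])
    | succ k =>
      refine ext_parts (by rw [hcast, castSuccPart_zero]) ?_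
      rw [lastPart_koszulDiff, lastPart_koszulDiff, ← LinearMap.comp_apply, ih, lastPart_zero]
      rfl

lemma koszulDiff_zero_apply (x : Fin p → R) (f : KoszulMod R p 1)
    (J : {s : Finset (Fin p) // s.card = 0}) :
    koszulDiff R p x 0 f J = ∑ i, x i * coeff f {i} := by
  obtain ⟨J, hJ⟩ := J
  obtain rfl := Finset.card_eq_zero.mp hJ
  simp [koszulDiff_apply]

theorem mem_range_koszulDiff_zero_iff (x : Fin p → R) (g : KoszulMod R p 0) :
    g ∈ LinearMap.range (koszulDiff R p x 0) ↔
      g ⟨∅, Finset.card_empty⟩ ∈ Ideal.span (Set.range x) := by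
  rw [Ideal.mem_span_range_iff_exists_fun]
  constructor
  · rintro ⟨f, rfl⟩
    exact ⟨fun i => coeff f {i}, by simp_rw [koszulDiff_zero_apply, mul_comm]⟩
  · rintro ⟨c, hc⟩
    refine ⟨fun S => ∑ i ∈ S.1, c i, ext_of_apply_empty ?_⟩
    simp_rw [koszulDiff_zero_apply, ← hc, mul_comm (x _)]
    refine Finset.sum_congr rfl fun i _ => ?_
    rw [coeff_of_card_eq _ (Finset.card_singleton i), Finset.sum_singleton]

def IsWeaklyRegular (x : Fin p → R) : Prop :=
  ∀ i r, x i * r ∈ Ideal.span (x '' {j | j < i}) → r ∈ Ideal.span (x '' {j | j < i})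

lemma IsWeaklyRegular.castSucc {x : Fin (p + 1) → R} (hx : IsWeaklyRegular x) :
    IsWeaklyRegular (x ∘ Fin.castSucc) := by
  intro i r
  have h : (x ∘ Fin.castSucc) '' {j | j < i} = x '' {j | j < i.castSucc} := by
    rw [Set.image_comp]
    exact congrArg (x '' ·) (Fin.image_castSucc_Iio i)
  rw [h]
  exact hx i.castSucc r

lemma IsWeaklyRegular.last {x : Fin (p + 1) → R} (hx : IsWeaklyRegular x) (r : R)
    (h : x (Fin.last p) * r ∈ Ideal.span (Set.range (x ∘ Fin.castSucc))) :
    r ∈ Ideal.span (Set.range (x ∘ Fin.castSucc)) := by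
  have hrange : Set.range (x ∘ Fin.castSucc) = x '' {j | j < Fin.last p} := by
    rw [Set.range_comp, Fin.range_castSucc]
    congr 1
  rw [hrange] at h ⊢
  exact hx (Fin.last p) r h

section Exactness

variable (x : Fin (p + 1) → R)

lemma mem_range_koszulDiff_of_lastPart_mem_range
    (hexact : LinearMap.ker (koszulDiff R p (x ∘ Fin.castSucc) k) ≤
      LinearMap.range (koszulDiff R p (x ∘ Fin.castSucc) (k + 1)))
    {f : KoszulMod R (p + 1) (k + 1)} (hf : koszulDiff R (p + 1) x k f = 0)
    (hlast : lastPart f ∈ LinearMap.range (koszulDiff R p (x ∘ Fin.castSucc) k)) :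
    f ∈ LinearMap.range (koszulDiff R (p + 1) x (k + 1)) := by
  obtain ⟨g, hg⟩ := hlast
  set c : R := (-1) ^ k * x (Fin.last p)
  have hcycle :
      castSuccPart f + c • g ∈ LinearMap.ker (koszulDiff R p (x ∘ Fin.castSucc) k) := by
    rw [LinearMap.mem_ker, map_add, map_smul, hg, ← castSuccPart_koszulDiff, hf,
      castSuccPart_zero]
  obtain ⟨h, hh⟩ := hexact hcycle
  refine ⟨glue h g, ext_parts ?_ ?_⟩
  · rw [castSuccPart_koszulDiff, castSuccPart_glue, lastPart_glue, hh, pow_succ]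
    module
  · rw [lastPart_koszulDiff, lastPart_glue, hg]

lemma lastPart_mem_range_koszulDiff_zero (hx : IsWeaklyRegular x)
    {f : KoszulMod R (p + 1) 1} (hf : koszulDiff R (p + 1) x 0 f = 0) :
    lastPart f ∈ LinearMap.range (koszulDiff R p (x ∘ Fin.castSucc) 0) := by
  have h := congrFun (castSuccPart_koszulDiff x f) ⟨∅, Finset.card_empty⟩
  rw [hf, castSuccPart_zero, Pi.add_apply, Pi.smul_apply, smul_eq_mul, pow_zero, one_mul,
    Pi.zero_apply, eq_comm, add_eq_zero_iff_neg_eq] at h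
  rw [mem_range_koszulDiff_zero_iff]
  refine hx.last _ (h ▸ neg_mem ?_)
  exact (mem_range_koszulDiff_zero_iff _ _).1 ⟨castSuccPart f, rfl⟩

end Exactness

theorem ker_koszulDiff_le_range {x : Fin p → R} (hx : IsWeaklyRegular x) (k : ℕ) :
    LinearMap.ker (koszulDiff R p x k) ≤ LinearMap.range (koszulDiff R p x (k + 1)) := by
  induction p generalizing k with
  | zero =>
    intro f _
    obtain rfl : f = 0 := funext fun S =>
      absurd (S.1.card_le_univ.trans_eq (Fintype.card_fin 0)) (by rw [S.2]; omega)
    exact zero_mem _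
  | succ p ih =>
    intro f hf
    refine mem_range_koszulDiff_of_lastPart_mem_range x (ih hx.castSucc k) hf ?_
    cases k with
    | zero => exact lastPart_mem_range_koszulDiff_zero x hx hf
    | succ k =>
      refine ih hx.castSucc k ?_
      rw [LinearMap.mem_ker, ← lastPart_koszulDiff, LinearMap.mem_ker.mp hf, lastPart_zero]

end Koszul

theorem stmt4_general (R : Type*) [CommRing R] (p : ℕ) (x : Fin p → R)
    (hreg : ∀ i : Fin p, ∀ r : R,
      x i * r ∈ Ideal.span (x '' {j | j < i}) → r ∈ Ideal.span (x '' {j | j < i})) :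
    (∀ k : ℕ, (koszulDiff R p x k).comp (koszulDiff R p x (k + 1)) = 0) ∧
    (∀ k : ℕ, LinearMap.ker (koszulDiff R p x k) =
      LinearMap.range (koszulDiff R p x (k + 1))) ∧
    (∀ g : KoszulMod R p 0,
      g ∈ LinearMap.range (koszulDiff R p x 0) ↔
        g ⟨∅, Finset.card_empty⟩ ∈ Ideal.span (Set.range x)) :=
  ⟨Koszul.koszulDiff_comp_koszulDiff x,
    fun k => le_antisymm (Koszul.ker_koszulDiff_le_range hreg k)
      (LinearMap.range_le_ker_iff.mpr (Koszul.koszulDiff_comp_koszulDiff x k)),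
    Koszul.mem_range_koszulDiff_zero_iff x⟩

/-- The Koszul complex of a regular sequence `x = (x₁, …, x_p)` is a free
resolution of `R/(x₁, …, x_p)`: it is a complex, it is exact at every positive
level (note that `⋀^{p+1} R^p = 0`, so exactness at the top level includes the
injectivity of the last differential), and the image of `δ_x : ⋀^1 R^p → R`
is the ideal `(x₁, …, x_p)`, so the cokernel of the complex is `R/(x)`. -/
theorem stmt4 (R : Type*) [CommRing R] (p : ℕ) (x : Fin p → R)
    (hreg : ∀ i : Fin p, ∀ r : R,
      x i * r ∈ Ideal.span (x '' {j | j < i}) → r ∈ Ideal.span (x '' {j | j < i}))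
    (hproper : Ideal.span (Set.range x) ≠ ⊤) :
    (∀ k : ℕ, (koszulDiff R p x k).comp (koszulDiff R p x (k + 1)) = 0) ∧
    (∀ k : ℕ, LinearMap.ker (koszulDiff R p x k) =
      LinearMap.range (koszulDiff R p x (k + 1))) ∧
    (∀ g : KoszulMod R p 0,
      g ∈ LinearMap.range (koszulDiff R p x 0) ↔
        g ⟨∅, Finset.card_empty⟩ ∈ Ideal.span (Set.range x)) :=
  stmt4_general R p x hreg
end

section
/- In R = C[[x,y]] with J = (y^k, x^ℓ y^m), k > m ≥ 0, ℓ ≥ 1: any ideal a of R/J of finite length (as R-module) is contained in the image of the ideal (y^m) in R/J. Consequently the length of J along the associated prime (x,y) equals ℓ(k-m). -/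
/-!
Write `R = ℂ⟦x, y⟧`. If `g ∉ (y^m)`, the ideals `(x^r ḡ)` of `R/J` never stabilise: an equation
`x^n g ≡ c x^(n+1) g` modulo `J ⊆ (y^m)` forces `y^m ∣ g (1 - c x)`, because `x` is a nonzerodivisor
modulo `y^m`, and `1 - c x` is a unit. Hence every finite-length ideal lies in `I = (y^m)/J`.
As an `R`-module, `I ≅ R/(J : y^m) = R/(x^l, y^(k-m))`. The residue field of `R` is `ℂ`, so this
length is a `ℂ`-dimension, and reading off the coefficients of `x^i y^j` for `i < l`, `j < k - m`
identifies `R/(x^l, y^(k-m))` with `ℂ^(l(k-m))`.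
-/

/-- The length of a module, i.e. the Krull dimension of its lattice of
submodules. -/
noncomputable def moduleLength (R M : Type*) [Ring R] [AddCommGroup M] [Module R M] :
    WithBot ℕ∞ :=
  Order.krullDim (Submodule R M)

open MvPowerSeries IsLocalRing

namespace IsLocalRing

theorem length_eq_length_of_surjective_algebraMap_residueField {K B : Type*} [Field K]
    [CommRing B] [IsLocalRing B] [Algebra K B]
    (h : Function.Surjective (algebraMap K (ResidueField B)))
    (M : Type*) [AddCommGroup M] [Module K M] [Module B M] [IsScalarTower K B M] :
    Module.length B M = Module.length K M := by
  have hres : Function.Surjective (algebraMap (ResidueField K) (ResidueField B)) := by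
    intro z
    obtain ⟨c, rfl⟩ := h z
    exact ⟨residue K c, rfl⟩
  rw [length_restrictScalars K B M, Module.length_eq_of_surjective hres,
    Module.length_eq_one (R := ResidueField B), mul_one]

end IsLocalRing

namespace Ideal

variable {R : Type*} [CommRing R]

theorem length_map_mk_span_singleton (J : Ideal R) (y : R) :
    Module.length R ((Ideal.span {y}).map (Ideal.Quotient.mk J)) =
      Module.length R (R ⧸ J.colon {y}) := by
  have htors : Ideal.torsionOf R (R ⧸ J) (Ideal.Quotient.mk J y) = J.colon {y} := by
    ext g
    simp [Algebra.smul_def, ← map_mul, Ideal.Quotient.eq_zero_iff_mem]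
  have hspan : R ∙ Ideal.Quotient.mk J y =
      ((Ideal.span {y}).map (Ideal.Quotient.mk J)).restrictScalars R := by
    rw [Ideal.map_span, Set.image_singleton]
    exact (Submodule.restrictScalars_span R (R ⧸ J) Ideal.Quotient.mk_surjective _).symm
  rw [← htors, (Ideal.quotTorsionOfEquivSpanSingleton R (R ⧸ J) _).length_eq, hspan]
  rfl

theorem dvd_of_mk_mem_of_isArtinian {J : Ideal R} {x y g : R} (hx : x ∈ (⊥ : Ideal R).jacobson)
    (hxy : ∀ f, y ∣ x * f → y ∣ f) (hJ : J ≤ Ideal.span {y}) {a : Ideal (R ⧸ J)}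
    [IsArtinian (R ⧸ J) a] (hg : Ideal.Quotient.mk J g ∈ a) : y ∣ g := by
  have : IsArtinian (R ⧸ J) (Ideal.span {Ideal.Quotient.mk J g}) :=
    isArtinian_of_le ((Ideal.span_singleton_le_iff_mem a).mpr hg)
  obtain ⟨n, ⟨z, hz⟩, hn⟩ := IsArtinian.exists_pow_succ_smul_dvd (Ideal.Quotient.mk J x)
    (⟨_, Ideal.mem_span_singleton_self _⟩ : Ideal.span {Ideal.Quotient.mk J g})
  obtain ⟨c, rfl⟩ := Ideal.mem_span_singleton'.mp hz
  obtain ⟨c, rfl⟩ := Ideal.Quotient.mk_surjective c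
  have hJmem : x ^ n * (g * (1 - x * c)) ∈ J := by
    rw [← Ideal.Quotient.eq_zero_iff_mem, ← sub_eq_zero.mpr (congrArg Subtype.val hn).symm]
    simp only [SetLike.mk_smul_mk, smul_eq_mul, map_mul, map_sub, map_pow, map_one, pow_succ]
    ring
  have hxy_pow : ∀ n f, y ∣ x ^ n * f → y ∣ f := by
    intro n
    induction n with
    | zero => simp
    | succ n ih => exact fun f hf => hxy f (ih _ (by rwa [pow_succ, mul_assoc] at hf))
  have hunit : IsUnit (1 - x * c) := by
    simpa [sub_eq_add_neg, add_comm, ← mul_neg] using Ideal.mem_jacobson_bot.mp hx (-c)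
  exact hunit.dvd_mul_right.mp (hxy_pow n _ (Ideal.mem_span_singleton.mp (hJ hJmem)))

end Ideal

namespace MvPowerSeries

section CommRing

variable {σ R : Type*} [CommRing R]

theorem X_pow_dvd_of_dvd_X_mul {i j : σ} (hij : i ≠ j) {b : ℕ} {f : MvPowerSeries σ R}
    (h : X j ^ b ∣ X i * f) : X j ^ b ∣ f := by
  rw [X_pow_dvd_iff] at h ⊢
  intro d hd
  have := h (Finsupp.single i 1 + d) (by simpa [Finsupp.single_apply, hij] using hd)
  rwa [X, coeff_add_monomial_mul, one_mul] at this

theorem X_mem_jacobson_bot (i : σ) : X i ∈ (⊥ : Ideal (MvPowerSeries σ R)).jacobson := by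
  refine Ideal.mem_jacobson_bot.mpr fun f => ?_
  simp [isUnit_iff_constantCoeff]

theorem mem_span_X_pow_pair_iff {i j : σ} {a b : ℕ} {f : MvPowerSeries σ R} :
    f ∈ Ideal.span {X i ^ a, X j ^ b} ↔ ∀ d : σ →₀ ℕ, d i < a → d j < b → coeff d f = 0 := by
  constructor
  · rintro hf d hi hj
    obtain ⟨c, e, rfl⟩ := Ideal.mem_span_pair.mp hf
    rw [map_add, X_pow_dvd_iff.mp (dvd_mul_left _ c) d hi,
      X_pow_dvd_iff.mp (dvd_mul_left _ e) d hj, add_zero]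
  · intro h
    -- keep the coefficients of `f` in the region `a ≤ d i`; the rest lies in `b ≤ d j`
    let g : MvPowerSeries σ R := fun d => if a ≤ d i then coeff d f else 0
    obtain ⟨u, hu⟩ : X i ^ a ∣ g :=
      X_pow_dvd_iff.mpr fun d hd => if_neg (by omega)
    obtain ⟨v, hv⟩ : X j ^ b ∣ f - g := X_pow_dvd_iff.mpr fun d hd => by
      change coeff d f - (if a ≤ d i then coeff d f else 0) = 0
      split_ifs with hdi
      · exact sub_self _
      · rw [sub_zero, h d (by omega) hd]
    exact Ideal.mem_span_pair.mpr ⟨u, v, by rw [mul_comm, ← hu, mul_comm, ← hv, add_sub_cancel]⟩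

theorem colon_span_X_pow (i j : σ) (l : ℕ) {k m : ℕ} (hmk : m ≤ k) :
    (Ideal.span {X j ^ k, X i ^ l * X j ^ m} : Ideal (MvPowerSeries σ R)).colon {X j ^ m} =
      Ideal.span {X i ^ l, X j ^ (k - m)} := by
  have hk : (X j : MvPowerSeries σ R) ^ k = X j ^ m * X j ^ (k - m) := by
    rw [← pow_add, Nat.add_sub_cancel' hmk]
  have hreg : (X j : MvPowerSeries σ R) ^ m ∈ nonZeroDivisors _ :=
    pow_mem X_mem_nonzeroDivisors m
  ext g
  rw [Submodule.mem_colon_singleton, smul_eq_mul, Ideal.mem_span_pair, Ideal.mem_span_pair]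
  constructor
  · rintro ⟨c, e, h⟩
    refine ⟨e, c, (mul_cancel_left_mem_nonZeroDivisors hreg).mp ?_⟩
    rw [mul_comm _ g, ← h, hk]
    ring
  · rintro ⟨c, e, rfl⟩
    exact ⟨e, c, by rw [hk]; ring⟩

end CommRing

section Field

variable {σ K : Type*} [Field K]

theorem surjective_algebraMap_residueField :
    Function.Surjective (algebraMap K (ResidueField (MvPowerSeries σ K))) := by
  intro z
  obtain ⟨f, rfl⟩ := residue_surjective z
  refine ⟨constantCoeff f, ?_⟩
  rw [IsScalarTower.algebraMap_apply K (MvPowerSeries σ K), ← sub_eq_zero,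
    ResidueField.algebraMap_eq, ← map_sub, residue_eq_zero_iff, mem_maximalIdeal, mem_nonunits_iff,
    isUnit_iff_constantCoeff]
  simp [MvPowerSeries.algebraMap_apply]

theorem length_quotient_span_X_pow_pair (a b : ℕ) :
    Module.length K (MvPowerSeries (Fin 2) K ⧸
      Ideal.span {(X 0 : MvPowerSeries (Fin 2) K) ^ a, X 1 ^ b}) = a * b := by
  let ψ : MvPowerSeries (Fin 2) K →ₗ[K] (Fin a × Fin b → K) :=
    LinearMap.pi fun p => coeff (Finsupp.single 0 p.1.val + Finsupp.single 1 p.2.val)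
  have hker : LinearMap.ker ψ =
      (Ideal.span {(X 0 : MvPowerSeries (Fin 2) K) ^ a, X 1 ^ b}).restrictScalars K := by
    ext f
    rw [LinearMap.mem_ker, Submodule.restrictScalars_mem, mem_span_X_pow_pair_iff, funext_iff]
    constructor
    · intro h d hd0 hd1
      have hd : d = Finsupp.single 0 (d 0) + Finsupp.single 1 (d 1) := by
        ext i
        fin_cases i <;> simp
      rw [hd]
      exact h (⟨d 0, hd0⟩, ⟨d 1, hd1⟩)
    · rintro h p
      exact h _ (by simp) (by simp)
  have hsurj : Function.Surjective ψ := by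
    intro v
    refine ⟨fun d => if h : d 0 < a ∧ d 1 < b then v (⟨d 0, h.1⟩, ⟨d 1, h.2⟩) else 0, ?_⟩
    ext p
    change dite _ _ _ = v p
    simp
  rw [← (Submodule.Quotient.restrictScalarsEquiv K _).length_eq, ← hker,
    (ψ.quotKerEquivOfSurjective hsurj).length_eq, Module.length_eq_finrank,
    Module.finrank_fintype_fun_eq_card]
  simp

end Field

end MvPowerSeries

theorem stmt9_general (k m l : ℕ) (hkm : m < k)
    (x y : MvPowerSeries (Fin 2) ℂ)
    (hx : x = MvPowerSeries.X 0) (hy : y = MvPowerSeries.X 1)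
    (J : Ideal (MvPowerSeries (Fin 2) ℂ))
    (hJ : J = Ideal.span {y ^ k, x ^ l * y ^ m})
    (I : Ideal (MvPowerSeries (Fin 2) ℂ ⧸ J))
    (hI : I = Ideal.map (Ideal.Quotient.mk J)
      (Ideal.span ({y ^ m} : Set (MvPowerSeries (Fin 2) ℂ)))) :
    (∀ a : Ideal (MvPowerSeries (Fin 2) ℂ ⧸ J),
      IsFiniteLength (MvPowerSeries (Fin 2) ℂ ⧸ J) a → a ≤ I) ∧
    IsFiniteLength (MvPowerSeries (Fin 2) ℂ ⧸ J) I ∧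
    moduleLength (MvPowerSeries (Fin 2) ℂ ⧸ J) I = (l * (k - m) : ℕ) := by
  subst hx hy hI
  have hlength : Module.length (MvPowerSeries (Fin 2) ℂ ⧸ J) (Ideal.map (Ideal.Quotient.mk J)
      (Ideal.span {X 1 ^ m})) = (l * (k - m) : ℕ) := by
    rw [← Module.length_eq_of_surjective Ideal.Quotient.mk_surjective,
      Ideal.length_map_mk_span_singleton, hJ, colon_span_X_pow 0 1 l hkm.le,
      IsLocalRing.length_eq_length_of_surjective_algebraMap_residueField
        surjective_algebraMap_residueField, length_quotient_span_X_pow_pair, Nat.cast_mul]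
  refine ⟨fun a ha => ?_, ?_, ?_⟩
  · have := (isFiniteLength_iff_isNoetherian_isArtinian.mp ha).2
    have hJy : J ≤ Ideal.span {X 1 ^ m} := by
      rw [hJ, Ideal.span_le, Set.insert_subset_iff, Set.singleton_subset_iff]
      exact ⟨Ideal.mem_span_singleton.mpr (pow_dvd_pow _ hkm.le),
        Ideal.mem_span_singleton.mpr (dvd_mul_left _ _)⟩
    intro z hz
    obtain ⟨g, rfl⟩ := Ideal.Quotient.mk_surjective z
    exact Ideal.mem_map_of_mem _ <| Ideal.mem_span_singleton.mpr <|
      Ideal.dvd_of_mk_mem_of_isArtinian (X_mem_jacobson_bot 0)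
        (fun _ => X_pow_dvd_of_dvd_X_mul (by decide)) hJy hz
  · rw [← Module.length_ne_top_iff, hlength]
    exact ENat.natCast_ne_top _
  · rw [moduleLength, ← Module.coe_length, hlength]
    rfl

/-- In `R = ℂ[[x,y]]` with `J = (y^k, x^ℓ y^m)`, `k > m ≥ 0`, `ℓ ≥ 1`: every
ideal of `R/J` of finite length is contained in the image of `(y^m)` in `R/J`,
and consequently the length of `J` along the associated prime `(x,y)`, i.e. the
length of the largest finite-length ideal `(y^m)(R/J)`, equals `ℓ(k-m)`. -/
theorem stmt9 (k m l : ℕ) (hkm : m < k) (hl : 1 ≤ l)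
    (x y : MvPowerSeries (Fin 2) ℂ)
    (hx : x = MvPowerSeries.X 0) (hy : y = MvPowerSeries.X 1)
    (J : Ideal (MvPowerSeries (Fin 2) ℂ))
    (hJ : J = Ideal.span {y ^ k, x ^ l * y ^ m})
    (I : Ideal (MvPowerSeries (Fin 2) ℂ ⧸ J))
    (hI : I = Ideal.map (Ideal.Quotient.mk J)
      (Ideal.span ({y ^ m} : Set (MvPowerSeries (Fin 2) ℂ)))) :
    (∀ a : Ideal (MvPowerSeries (Fin 2) ℂ ⧸ J),
      IsFiniteLength (MvPowerSeries (Fin 2) ℂ ⧸ J) a → a ≤ I) ∧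
    IsFiniteLength (MvPowerSeries (Fin 2) ℂ ⧸ J) I ∧
    moduleLength (MvPowerSeries (Fin 2) ℂ ⧸ J) I = (l * (k - m) : ℕ) :=
  stmt9_general k m l hkm x y hx hy J hJ I hI
end

section
/- Let (E,φ) and (F,ψ) be complexes of finite free modules over a commutative ring, differentials of odd degree, and b : (E,φ) → (F,ψ) a (degree-preserving, even) morphism of complexes, i.e., ψ_k b_k = b_{k-1} φ_k. Let D be a derivation on endomorphism-valued forms satisfying the graded Leibniz rule and compatible with composition. Then D(ψ_1) ⋯ D(ψ_p) b_p = b_0 D(φ_1) ⋯ D(φ_p) + ψ_1 α + β φ_p for some Hom(E_p, F_1)-valued form α and some Hom(E_{p-1}, F_0)-valued form β. -/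
/-!
Differentiating `ψ_{k+1} ψ_{k+2} = 0` with the graded Leibniz rule gives
`D ψ_{k+1} · ψ_{k+2} = ψ_{k+1} · D ψ_{k+2}` (likewise for `φ`), and differentiating
`ψ_{k+1} b_{k+1} = b_k φ_{k+1}` gives
`D ψ_{k+1} · b_{k+1} = b_k · D φ_{k+1} + ψ_{k+1} · D b_{k+1} + D b_k · φ_{k+1}`.
By induction on `p`, the last relation moves `b` one step to the left. Of the two error
terms, `D ψ_1 ⋯ D ψ_p · ψ_{p+1}` equals `ψ_1 · D ψ_2 ⋯ D ψ_{p+1}` by repeated swapping,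
and `φ_p · D φ_{p+1} = D φ_p · φ_{p+1}` keeps the other one a right multiple of the
last `φ`.
-/

section

variable {A : Type*} [Ring A]

theorem mul_eq_mul_of_leibniz_of_mul_eq_zero {D : A → A} (hD : D 0 = 0) {x y : A}
    (hxy : x * y = 0) (hleib : D (x * y) = D x * y - x * D y) : D x * y = x * D y := by
  rw [hxy, hD] at hleib
  exact sub_eq_zero.mp hleib.symm

theorem leibniz_of_mul_eq_mul {D : A → A} {x y b b' : A} (hyb : y * b' = b * x)
    (hleib_yb : D (y * b') = D y * b' - y * D b')
    (hleib_bx : D (b * x) = D b * x + b * D x) :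
    D y * b' = b * D x + y * D b' + D b * x := by
  rw [hyb, hleib_bx] at hleib_yb
  rw [← eq_sub_iff_add_eq.mp hleib_yb]
  abel

theorem prod_map_range_mul_of_intertwine {f x : ℕ → A}
    (h : ∀ i, f i * x (i + 1) = x i * f (i + 1)) (n : ℕ) :
    ((List.range n).map f).prod * x n = x 0 * ((List.range n).map fun i => f (i + 1)).prod := by
  induction n with
  | zero => simp
  | succ n ih =>
    rw [List.prod_range_succ, List.prod_range_succ, mul_assoc, h, ← mul_assoc, ih, mul_assoc]

theorem exists_prod_mul_eq_mul_prod_add_mul_add_mul {φ ψ b dφ dψ db : ℕ → A}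
    (hψ : ∀ k, dψ (k + 1) * ψ (k + 2) = ψ (k + 1) * dψ (k + 2))
    (hφ : ∀ k, dφ (k + 1) * φ (k + 2) = φ (k + 1) * dφ (k + 2))
    (hb : ∀ k, dψ (k + 1) * b (k + 1) =
      b k * dφ (k + 1) + ψ (k + 1) * db (k + 1) + db k * φ (k + 1))
    (n : ℕ) :
    ∃ α β : A,
      ((List.range (n + 1)).map fun k => dψ (k + 1)).prod * b (n + 1) =
        b 0 * ((List.range (n + 1)).map fun k => dφ (k + 1)).prod + ψ 1 * α + β * φ (n + 1) := by
  induction n with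
  | zero => exact ⟨db 1, db 0, by simpa using hb 0⟩
  | succ n ih =>
    obtain ⟨α, β, hαβ⟩ := ih
    set P := ((List.range (n + 1)).map fun k => dψ (k + 1)).prod
    have hPψ : P * ψ (n + 2) = ψ 1 * ((List.range (n + 1)).map fun k => dψ (k + 2)).prod :=
      prod_map_range_mul_of_intertwine (f := fun k => dψ (k + 1)) (x := fun k => ψ (k + 1))
        hψ (n + 1)
    refine ⟨α * dφ (n + 2) + ((List.range (n + 1)).map fun k => dψ (k + 2)).prod * db (n + 2),
      β * dφ (n + 1) + P * db (n + 1), ?_⟩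
    calc ((List.range (n + 2)).map fun k => dψ (k + 1)).prod * b (n + 2)
        = P * b (n + 1) * dφ (n + 2) + P * ψ (n + 2) * db (n + 2)
            + P * db (n + 1) * φ (n + 2) := by
          rw [List.prod_range_succ, mul_assoc, hb (n + 1)]
          noncomm_ring
      _ = _ := by
          rw [hαβ, hPψ, List.prod_range_succ _ (n + 1), mul_add, add_mul,
            mul_assoc β, ← hφ n]
          noncomm_ring

end

/-- Algebraic version of Lemma 4.3: if `b` is an (even) morphism of complexes
between the complexes `(F,ψ)` and `(E,φ)` (with `φ_k, ψ_k` odd) and `D` is an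
additive operator satisfying the graded Leibniz rules, then
`D(ψ₁) ⋯ D(ψ_p) b_p = b₀ D(φ₁) ⋯ D(φ_p) + ψ₁ α + β φ_p` for some `α`, `β`. -/
theorem stmt16 (A : Type*) [Ring A] (D : A → A) (p : ℕ) (hp : 1 ≤ p)
    (φ ψ b : ℕ → A)
    (hadd : ∀ u v, D (u + v) = D u + D v)
    (hchain : ∀ k, ψ (k + 1) * b (k + 1) = b k * φ (k + 1))
    (hφcx : ∀ k, φ (k + 1) * φ (k + 2) = 0)
    (hψcx : ∀ k, ψ (k + 1) * ψ (k + 2) = 0)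
    (hleibφ : ∀ k, D (φ (k + 1) * φ (k + 2)) =
      D (φ (k + 1)) * φ (k + 2) - φ (k + 1) * D (φ (k + 2)))
    (hleibψ : ∀ k, D (ψ (k + 1) * ψ (k + 2)) =
      D (ψ (k + 1)) * ψ (k + 2) - ψ (k + 1) * D (ψ (k + 2)))
    (hleibψb : ∀ k, D (ψ (k + 1) * b (k + 1)) =
      D (ψ (k + 1)) * b (k + 1) - ψ (k + 1) * D (b (k + 1)))
    (hleibbφ : ∀ k, D (b k * φ (k + 1)) =
      D (b k) * φ (k + 1) + b k * D (φ (k + 1))) :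
    ∃ α β : A,
      ((List.range p).map (fun k => D (ψ (k + 1)))).prod * b p =
        b 0 * ((List.range p).map (fun k => D (φ (k + 1)))).prod
          + ψ 1 * α + β * φ p := by
  have hD : D 0 = 0 := (AddMonoidHom.mk' D hadd).map_zero
  obtain ⟨n, rfl⟩ := Nat.exists_eq_add_of_le' hp
  exact exists_prod_mul_eq_mul_prod_add_mul_add_mul (dψ := fun k => D (ψ k))
    (dφ := fun k => D (φ k)) (db := fun k => D (b k))
    (fun k => mul_eq_mul_of_leibniz_of_mul_eq_zero hD (hψcx k) (hleibψ k))
    (fun k => mul_eq_mul_of_leibniz_of_mul_eq_zero hD (hφcx k) (hleibφ k))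
    (fun k => leibniz_of_mul_eq_mul (hchain k) (hleibψb k) (hleibbφ k)) n
end
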